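/- arXiv:1311.5069 — 3 statements merged into one kernel-verified Lean document; each statement's English description precedes it below -/
import Mathlib

section
/- Let D = diag(λ₁,…,λₙ) be a diagonal n×n complex matrix with λ_k > 0 for all k and Σ_{k=1}^n λ_k = 1. Let g₁, g₂ : (0,∞)×(0,∞) → [0,∞) be symmetric functions with g₁(x,y) ≥ g₂(x,y) for all x,y > 0, and let A⁽¹⁾,…,A⁽ᴺ⁾ be Hermitian n×n complex matrices. Then the N×N matrix Cov_{D,g₁} − Cov_{D,g₂} is Hermitian, has real entries, and is positive semidefinite. -/
/-! Since `Cov_{D,g₁} − Cov_{D,g₂} = Cov_{D,g₁−g₂}`, it suffices to treat one weight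
`h = g₁ − g₂ ≥ 0`. The centred matrices `A⁽ⁱ⁾₀` are Hermitian (`Tr(DA)` is real), so
`Cov_{D,h} = X Xᴴ` with `X i (k, l) = √h(λ_k, λ_l) · (A⁽ⁱ⁾₀)_{lk}`, a Gram matrix, hence positive
semidefinite. Symmetry of `h` makes `Cov_{D,h}` symmetric, and a symmetric Hermitian matrix is
real. -/

open ComplexOrder Matrix

/-- The diagonal density matrix `D = diag(λ₁,…,λₙ)`. -/
noncomputable def Dmat {n : ℕ} (lam : Fin n → ℝ) : Matrix (Fin n) (Fin n) ℂ :=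
  Matrix.diagonal fun k => (lam k : ℂ)

/-- `A₀ = A - Tr(D A)·I`. -/
noncomputable def cent {n : ℕ} (lam : Fin n → ℝ) (A : Matrix (Fin n) (Fin n) ℂ) :
    Matrix (Fin n) (Fin n) ℂ :=
  A - (Dmat lam * A).trace • (1 : Matrix (Fin n) (Fin n) ℂ)

/-- The `N×N` covariance matrix `[Cov_{D,g}]_{ij} = (A⁽ⁱ⁾₀, A⁽ʲ⁾₀)_{D,g}` where
`(A,B)_{D,g} = Σ_{k,l} A_{lk}·B_{kl}·g(λ_k,λ_l)`. -/
noncomputable def covM {n N : ℕ} (lam : Fin n → ℝ) (g : ℝ → ℝ → ℝ)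
    (A : Fin N → Matrix (Fin n) (Fin n) ℂ) : Matrix (Fin N) (Fin N) ℂ :=
  Matrix.of fun i j =>
    ∑ k, ∑ l, (g (lam k) (lam l) : ℂ) * cent lam (A i) l k * cent lam (A j) k l

lemma Matrix.IsHermitian.im_apply_eq_zero {ι : Type*} {M : Matrix ι ι ℂ} (hM : M.IsHermitian)
    {i j : ι} (hij : M j i = M i j) : (M i j).im = 0 := by
  rw [← Complex.conj_eq_iff_im]
  exact (hM.apply j i).trans hij

section WeightedPairing

variable {ι m : Type*} [Fintype m] (w : m → m → ℝ) (B : ι → Matrix m m ℂ)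

lemma posSemidef_of_weightedPairing [Fintype ι] (hw : ∀ k l, 0 ≤ w k l)
    (hB : ∀ i, (B i).IsHermitian) :
    (Matrix.of fun i j => ∑ k, ∑ l, (w k l : ℂ) * B i l k * B j k l).PosSemidef := by
  set X : Matrix ι (m × m) ℂ := Matrix.of fun i p => (√(w p.1 p.2) : ℂ) * B i p.2 p.1
  convert Matrix.posSemidef_self_mul_conjTranspose X using 1
  ext i j
  rw [Matrix.mul_apply, Fintype.sum_prod_type]
  refine Finset.sum_congr rfl fun k _ => Finset.sum_congr rfl fun l _ => ?_
  have hsq : (w k l : ℂ) = √(w k l) * √(w k l) := by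
    exact_mod_cast (Real.mul_self_sqrt (hw k l)).symm
  simp only [X, Matrix.of_apply, Matrix.conjTranspose_apply, star_mul', Complex.star_def,
    Complex.conj_ofReal, ← (hB j).apply k l, hsq]
  ring

lemma weightedPairing_comm (hw : ∀ k l, w k l = w l k) (i j : ι) :
    ∑ k, ∑ l, (w k l : ℂ) * B i l k * B j k l = ∑ k, ∑ l, (w k l : ℂ) * B j l k * B i k l := by
  rw [Finset.sum_comm]
  refine Finset.sum_congr rfl fun k _ => Finset.sum_congr rfl fun l _ => ?_
  rw [hw]
  ring

end WeightedPairing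

lemma cent_isHermitian {n : ℕ} (lam : Fin n → ℝ) {A : Matrix (Fin n) (Fin n) ℂ}
    (hA : A.IsHermitian) : (cent lam A).IsHermitian := by
  have hD : (Dmat lam).IsHermitian := by
    simp [Dmat, Matrix.IsHermitian, Matrix.diagonal_conjTranspose]
  have htr : star (Dmat lam * A).trace = (Dmat lam * A).trace := by
    rw [← Matrix.trace_conjTranspose, Matrix.conjTranspose_mul, hA.eq, hD.eq, Matrix.trace_mul_comm]
  refine hA.sub ?_
  rw [Matrix.IsHermitian, Matrix.conjTranspose_smul, Matrix.conjTranspose_one, htr]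

lemma covM_sub {n N : ℕ} (lam : Fin n → ℝ) (g₁ g₂ : ℝ → ℝ → ℝ)
    (A : Fin N → Matrix (Fin n) (Fin n) ℂ) :
    covM lam g₁ A - covM lam g₂ A = covM lam (g₁ - g₂) A := by
  ext i j
  simp only [covM, Matrix.sub_apply, Matrix.of_apply, ← Finset.sum_sub_distrib, Pi.sub_apply,
    Complex.ofReal_sub]
  refine Finset.sum_congr rfl fun k _ => Finset.sum_congr rfl fun l _ => ?_
  ring

theorem covM_sub_covM_posSemidef_general (n N : ℕ) (lam : Fin n → ℝ)
    (hlam : ∀ k, 0 < lam k)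
    (g₁ g₂ : ℝ → ℝ → ℝ)
    (hg₁_symm : ∀ x y : ℝ, 0 < x → 0 < y → g₁ x y = g₁ y x)
    (hg₂_symm : ∀ x y : ℝ, 0 < x → 0 < y → g₂ x y = g₂ y x)
    (hg : ∀ x y : ℝ, 0 < x → 0 < y → g₂ x y ≤ g₁ x y)
    (A : Fin N → Matrix (Fin n) (Fin n) ℂ) (hA : ∀ a, (A a).IsHermitian) :
    (covM lam g₁ A - covM lam g₂ A).IsHermitian ∧
      (∀ a b, ((covM lam g₁ A - covM lam g₂ A) a b).im = 0) ∧
      (covM lam g₁ A - covM lam g₂ A).PosSemidef := by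
  have hnonneg : ∀ k l, 0 ≤ (g₁ - g₂) (lam k) (lam l) := fun k l =>
    sub_nonneg.2 (hg _ _ (hlam k) (hlam l))
  have hsymm : ∀ k l, (g₁ - g₂) (lam k) (lam l) = (g₁ - g₂) (lam l) (lam k) := fun k l => by
    simp only [Pi.sub_apply, hg₁_symm _ _ (hlam k) (hlam l), hg₂_symm _ _ (hlam k) (hlam l)]
  have hpsd : (covM lam (g₁ - g₂) A).PosSemidef :=
    posSemidef_of_weightedPairing (fun k l => (g₁ - g₂) (lam k) (lam l)) (fun i => cent lam (A i))
      hnonneg fun i => cent_isHermitian lam (hA i)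
  have hcomm : ∀ a b, covM lam (g₁ - g₂) A b a = covM lam (g₁ - g₂) A a b := fun a b =>
    weightedPairing_comm (fun k l => (g₁ - g₂) (lam k) (lam l)) (fun i => cent lam (A i)) hsymm b a
  rw [covM_sub]
  exact ⟨hpsd.isHermitian, fun a b => hpsd.isHermitian.im_apply_eq_zero (hcomm a b), hpsd⟩

/-- For a diagonal state `D = diag(λ₁,…,λₙ)` with `λ_k > 0`, `Σ λ_k = 1`, symmetric
nonnegative functions `g₁ ≥ g₂` on `(0,∞)×(0,∞)` and Hermitian `A⁽¹⁾,…,A⁽ᴺ⁾`, the matrix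
`Cov_{D,g₁} − Cov_{D,g₂}` is Hermitian, has real entries and is positive semidefinite. -/
theorem covM_sub_covM_posSemidef (n N : ℕ) (lam : Fin n → ℝ)
    (hlam : ∀ k, 0 < lam k) (hsum : ∑ k, lam k = 1)
    (g₁ g₂ : ℝ → ℝ → ℝ)
    (hg₁_nonneg : ∀ x y : ℝ, 0 < x → 0 < y → 0 ≤ g₁ x y)
    (hg₂_nonneg : ∀ x y : ℝ, 0 < x → 0 < y → 0 ≤ g₂ x y)
    (hg₁_symm : ∀ x y : ℝ, 0 < x → 0 < y → g₁ x y = g₁ y x)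
    (hg₂_symm : ∀ x y : ℝ, 0 < x → 0 < y → g₂ x y = g₂ y x)
    (hg : ∀ x y : ℝ, 0 < x → 0 < y → g₂ x y ≤ g₁ x y)
    (A : Fin N → Matrix (Fin n) (Fin n) ℂ) (hA : ∀ a, (A a).IsHermitian) :
    (covM lam g₁ A - covM lam g₂ A).IsHermitian ∧
      (∀ a b, ((covM lam g₁ A - covM lam g₂ A) a b).im = 0) ∧
      (covM lam g₁ A - covM lam g₂ A).PosSemidef :=
  covM_sub_covM_posSemidef_general n N lam hlam g₁ g₂ hg₁_symm hg₂_symm hg A hA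
end

section
/- For every f ∈ F_op and all x, y > 0, one has g_cl(x,y) ≥ g_f^{s}(x,y); equivalently, m_f(x,y) ≥ f(0)·(x+y). -/
/-!
Operator monotonicity on `2 × 2` matrices already gives `(1 - θ) f t + θ f s ≤ f u` whenever
`(1 - θ) t + θ s < u`: the real symmetric matrix `X` with eigenvalues `t, s` and `(0,0)`-entry
`(1 - θ) t + θ s` lies below a diagonal matrix `diag (u, B)` for `B` large, and the `(0,0)`-entries
of `f X` and `f (diag (u, B))` are the chord of `f` through `t, s` at that point and `f u`.
With `t = δ`, `s = δ⁻¹`, `θ = δ (z - 2δ)` the symmetry `δ f (δ⁻¹) = f δ` turns the left side into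
`(1 - δ (z - 2δ) + z - 2δ) f δ`, which tends to `(1 + z) f(0)` as `δ → 0⁺`. Hence
`f z ≥ f(0) (1 + z)`, which is `m_f(x, y) ≥ f(0) (x + y)` for `z = x / y`.
-/

open ComplexOrder Matrix

/-- `f ∈ F_op`: `f : (0,∞) → (0,∞)` is operator monotone (via the continuous functional
calculus on Hermitian matrices, with the Loewner order expressed through `PosSemidef`),
satisfies `f(x) = x·f(1/x)` for `x > 0`, and `f(1) = 1`. -/
structure IsFop (f : ℝ → ℝ) : Prop where
  pos : ∀ x : ℝ, 0 < x → 0 < f x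
  opMono : ∀ (m : ℕ) (X Y : Matrix (Fin m) (Fin m) ℂ), X.PosSemidef → Y.PosSemidef →
    (Y - X).PosSemidef → (cfc f Y - cfc f X).PosSemidef
  funcEq : ∀ x : ℝ, 0 < x → f x = x * f x⁻¹
  normalized : f 1 = 1

/-- `f(0) = lim_{t→0⁺} f(t)`. -/
def IsFzero (f : ℝ → ℝ) (f0 : ℝ) : Prop :=
  Filter.Tendsto f (nhdsWithin 0 (Set.Ioi 0)) (nhds f0)

/-- `m_f(x,y) = y·f(x/y)`. -/
noncomputable def mfun (f : ℝ → ℝ) (x y : ℝ) : ℝ := y * f (x / y)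

/-- `g_cl(x,y) = (x+y)/2`. -/
noncomputable def gcl (x y : ℝ) : ℝ := (x + y) / 2

/-- `g_f^{as}(x,y) = f(0)·(x−y)²/(2·m_f(x,y))`. -/
noncomputable def gas (f : ℝ → ℝ) (f0 : ℝ) (x y : ℝ) : ℝ :=
  f0 * (x - y) ^ 2 / (2 * mfun f x y)

/-- `g_f^{s}(x,y) = f(0)·(x+y)²/(2·m_f(x,y))`. -/
noncomputable def gs (f : ℝ → ℝ) (f0 : ℝ) (x y : ℝ) : ℝ :=
  f0 * (x + y) ^ 2 / (2 * mfun f x y)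

noncomputable def realSymm₂ (a b c : ℝ) : Matrix (Fin 2) (Fin 2) ℂ := !![(a : ℂ), c; c, b]

lemma isSelfAdjoint_realSymm₂ (a b c : ℝ) : IsSelfAdjoint (realSymm₂ a b c) := by
  ext i j
  fin_cases i <;> fin_cases j <;> simp [realSymm₂]

lemma realSymm₂_sub (a b c a' b' c' : ℝ) :
    realSymm₂ a b c - realSymm₂ a' b' c' = realSymm₂ (a - a') (b - b') (c - c') := by
  ext i j
  fin_cases i <;> fin_cases j <;> simp [realSymm₂]

lemma posSemidef_realSymm₂ {a b c : ℝ} (ha : 0 ≤ a) (hb : 0 ≤ b) (h : c ^ 2 ≤ a * b) :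
    (realSymm₂ a b c).PosSemidef := by
  rcases ha.eq_or_lt with rfl | ha
  · obtain rfl : c = 0 := by nlinarith
    convert PosSemidef.diagonal (n := Fin 2) (d := ![0, (b : ℂ)]) ?_
    · ext i j; fin_cases i <;> fin_cases j <;> simp [realSymm₂]
    · intro i; fin_cases i <;> simp [hb]
  · have hdecomp : realSymm₂ a b c = (a⁻¹ : ℝ) • vecMulVec ![(a : ℂ), c] (star ![(a : ℂ), c])
        + diagonal ![0, ((b - c ^ 2 / a : ℝ) : ℂ)] := by
      have ha' : (a : ℂ) ≠ 0 := by exact_mod_cast ha.ne'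
      ext i j
      fin_cases i <;> fin_cases j <;> simp [realSymm₂, vecMulVec]
      all_goals field_simp
      ring
    rw [hdecomp]
    refine .add (.smul (posSemidef_vecMulVec_self_star _) (by positivity)) (.diagonal ?_)
    have : c ^ 2 / a ≤ b := by rwa [div_le_iff₀ ha, mul_comm]
    intro i
    fin_cases i
    · simp
    · exact Complex.zero_le_real.mpr (sub_nonneg.mpr this)

lemma spectrum_realSymm₂_subset {a b c s t : ℝ} (htr : a + b = s + t)
    (hdet : a * b - c ^ 2 = s * t) : spectrum ℝ (realSymm₂ a b c) ⊆ {s, t} := by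
  intro x hx
  have hcharpoly : (algebraMap ℝ _ x - realSymm₂ a b c).det = (((x - s) * (x - t) : ℝ) : ℂ) := by
    rw [det_fin_two]
    simp [realSymm₂, algebraMap_matrix_apply]
    have htr' : (a + b : ℂ) = s + t := by exact_mod_cast htr
    have hdet' : (a * b - c ^ 2 : ℂ) = s * t := by exact_mod_cast hdet
    linear_combination -(x : ℂ) * htr' + hdet'
  rw [spectrum.mem_iff, isUnit_iff_isUnit_det, hcharpoly, isUnit_iff_ne_zero, not_not,
    Complex.ofReal_eq_zero, mul_eq_zero, sub_eq_zero, sub_eq_zero] at hx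
  exact hx

lemma cfc_eq_affine_of_spectrum_subset {A : Type*} [Ring A] [StarRing A] [Algebra ℝ A]
    [TopologicalSpace A] [ContinuousFunctionalCalculus ℝ A IsSelfAdjoint] {a : A}
    (ha : IsSelfAdjoint a) {s t : ℝ} (hspec : spectrum ℝ a ⊆ {s, t}) (f : ℝ → ℝ) :
    cfc f a = slope f t s • a + algebraMap ℝ A (f t - slope f t s * t) := by
  have hchord : (spectrum ℝ a).EqOn f (fun x ↦ slope f t s * x + (f t - slope f t s * t)) := by
    intro x hx
    rcases hspec hx with rfl | rfl
    · have := sub_smul_slope f t x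
      simp only [smul_eq_mul, vsub_eq_sub] at this
      linarith
    · ring
  rw [cfc_congr hchord, cfc_add .., cfc_const_mul_id _ a, cfc_const _ a]

lemma cfc_realSymm₂_apply_zero_zero (f : ℝ → ℝ) {a b c s t : ℝ} (htr : a + b = s + t)
    (hdet : a * b - c ^ 2 = s * t) :
    cfc f (realSymm₂ a b c) 0 0 = ((f t + slope f t s * (a - t) : ℝ) : ℂ) := by
  rw [cfc_eq_affine_of_spectrum_subset (isSelfAdjoint_realSymm₂ a b c)
    (spectrum_realSymm₂_subset htr hdet)]
  rw [Matrix.add_apply, Matrix.smul_apply, algebraMap_matrix_apply, if_pos rfl]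
  simp [realSymm₂]
  ring

def IsMatrixMonotone (n : ℕ) (f : ℝ → ℝ) : Prop :=
  ∀ X Y : Matrix (Fin n) (Fin n) ℂ, X.PosSemidef → Y.PosSemidef → (Y - X).PosSemidef →
    (cfc f Y - cfc f X).PosSemidef

theorem IsMatrixMonotone.convexComb_le {f : ℝ → ℝ} (hf : IsMatrixMonotone 2 f)
    {t s θ u : ℝ} (ht : 0 ≤ t) (hs : 0 ≤ s) (hθ₀ : 0 ≤ θ) (hθ₁ : θ ≤ 1)
    (hu : (1 - θ) * t + θ * s < u) : (1 - θ) * f t + θ * f s ≤ f u := by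
  set a := (1 - θ) * t + θ * s
  set b := θ * t + (1 - θ) * s
  set c := √(θ * (1 - θ)) * (s - t)
  set B := b + c ^ 2 / (u - a)
  have hua : 0 < u - a := sub_pos.mpr hu
  have hc : c ^ 2 = θ * (1 - θ) * (s - t) ^ 2 := by
    rw [mul_pow, Real.sq_sqrt (by nlinarith)]
  have htr : a + b = s + t := by ring
  have hdet : a * b - c ^ 2 = s * t := by rw [hc]; ring
  have ha : 0 ≤ a := by positivity
  have hb : 0 ≤ b := by positivity
  have hBb : 0 ≤ B - b := by simp only [B, add_sub_cancel_left]; positivity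
  have hX : (realSymm₂ a b c).PosSemidef :=
    posSemidef_realSymm₂ ha hb (by nlinarith [mul_nonneg ht hs])
  have hY : (realSymm₂ u B 0).PosSemidef :=
    posSemidef_realSymm₂ (by linarith) (by linarith) (by nlinarith)
  have hYX : (realSymm₂ u B 0 - realSymm₂ a b c).PosSemidef := by
    rw [realSymm₂_sub]
    refine posSemidef_realSymm₂ hua.le hBb (le_of_eq ?_)
    simp only [B, add_sub_cancel_left]
    field_simp
    ring
  have hentry := (hf _ _ hX hY hYX).diag_nonneg (i := 0)
  rw [Matrix.sub_apply, cfc_realSymm₂_apply_zero_zero f htr hdet,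
    cfc_realSymm₂_apply_zero_zero f (s := u) (t := B) rfl (by ring),
    ← Complex.ofReal_sub, Complex.zero_le_real] at hentry
  have hslope_ts := sub_smul_slope f t s
  have hslope_Bu := sub_smul_slope f B u
  simp only [smul_eq_mul, vsub_eq_sub] at hslope_ts hslope_Bu
  have : slope f t s * (a - t) = θ * (f s - f t) := by rw [← hslope_ts]; ring
  linarith

open Filter Topology in
theorem IsFop.mul_one_add_le {f : ℝ → ℝ} (hf : IsFop f) {f0 : ℝ} (hf0 : IsFzero f f0)
    {z : ℝ} (hz : 0 < z) : f0 * (1 + z) ≤ f z := by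
  set w : ℝ → ℝ := fun δ ↦ 1 - δ * (z - 2 * δ) + (z - 2 * δ)
  have hw : Tendsto w (𝓝[>] 0) (𝓝 (1 + z)) := by
    have : Continuous w := by fun_prop
    simpa [w] using (this.tendsto 0).mono_left nhdsWithin_le_nhds
  have hbound : ∀ᶠ δ in 𝓝[>] 0, w δ * f δ ≤ f z := by
    filter_upwards [Ioo_mem_nhdsGT (show 0 < min (z / 2) z⁻¹ by positivity)] with δ hδ
    obtain ⟨hδ₀, hδ₁⟩ := hδ
    rw [lt_min_iff] at hδ₁
    have hθ₀ : 0 ≤ δ * (z - 2 * δ) := by nlinarith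
    have hθ : δ * (z - 2 * δ) * δ⁻¹ = z - 2 * δ := by field_simp
    have hδz : δ * z < 1 := by
      simpa [hz.ne'] using mul_lt_mul_of_pos_right hδ₁.2 hz
    have hconvex := IsMatrixMonotone.convexComb_le (hf.opMono 2) (t := δ) (s := δ⁻¹)
      (u := z) hδ₀.le (by positivity) hθ₀ (by nlinarith) (by rw [hθ]; nlinarith)
    have hsym : δ * (z - 2 * δ) * f δ⁻¹ = (z - 2 * δ) * f δ := by
      rw [hf.funcEq δ hδ₀]
      ring
    simp only [w]
    linarith
  rw [mul_comm]
  exact le_of_tendsto (hw.mul hf0) hbound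

/-- For every `f ∈ F_op` and `x, y > 0`: `g_cl(x,y) ≥ g_f^{s}(x,y)`; equivalently `m_f(x,y) ≥ f(0)·(x+y)`. -/
theorem gcl_ge_gs
    (f : ℝ → ℝ) (hf : IsFop f) (f0 : ℝ) (hf0 : IsFzero f f0) :
    ∀ x y : ℝ, 0 < x → 0 < y → gs f f0 x y ≤ gcl x y ∧ f0 * (x + y) ≤ mfun f x y := by
  intro x y hx hy
  have hm : f0 * (x + y) ≤ mfun f x y :=
    calc f0 * (x + y) = y * (f0 * (1 + x / y)) := by field_simp; ring
      _ ≤ y * f (x / y) := by gcongr; exact hf.mul_one_add_le hf0 (div_pos hx hy)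
  have hmpos : 0 < mfun f x y := mul_pos hy (hf.pos _ (div_pos hx hy))
  refine ⟨?_, hm⟩
  rw [gs, gcl, div_le_div_iff₀ (by positivity) two_pos]
  nlinarith [mul_le_mul_of_nonneg_left hm (by positivity : (0 : ℝ) ≤ x + y)]
end

section
/- For every f ∈ F_op and all x, y > 0, one has g_cl(x,y) ≥ g_f^{as}(x,y); equivalently, (x+y)·m_f(x,y) ≥ f(0)·(x−y)². -/
open ComplexOrder Matrix

/-! Operator monotonicity on `1 × 1` matrices makes `f` nondecreasing on `[0, ∞)`, so
`f ≥ f(0)` on `(0, ∞)`. Hence `m_f(x, y) ≥ f(0)·y`, and by the symmetry `m_f(x, y) = m_f(y, x)`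
coming from `f(t) = t·f(1/t)` also `m_f(x, y) ≥ f(0)·x`. Therefore
`(x + y)·m_f(x, y) ≥ f(0)·(x² + y²) ≥ f(0)·(x − y)²`. -/

lemma Matrix.posSemidef_algebraMap_iff {n 𝕜 : Type*} [Fintype n] [DecidableEq n] [Nonempty n]
    [RCLike 𝕜] (r : ℝ) : (algebraMap ℝ (Matrix n n 𝕜) r).PosSemidef ↔ 0 ≤ r := by
  simp [algebraMap_eq_diagonal]

lemma MonotoneOn.le_of_tendsto_nhdsGT {f : ℝ → ℝ} {a L t : ℝ} (hmono : MonotoneOn f (Set.Ioi a))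
    (hlim : Filter.Tendsto f (nhdsWithin a (Set.Ioi a)) (nhds L)) (ht : a < t) : L ≤ f t := by
  refine le_of_tendsto hlim ?_
  filter_upwards [Ioo_mem_nhdsGT ht] with s hs
  exact hmono hs.1 ht hs.2.le

namespace IsFop

variable {f : ℝ → ℝ}

theorem monotoneOn (hf : IsFop f) : MonotoneOn f (Set.Ici 0) := by
  intro a ha b hb hab
  have h := hf.opMono 1 (algebraMap ℝ _ a) (algebraMap ℝ _ b)
    ((posSemidef_algebraMap_iff a).2 ha) ((posSemidef_algebraMap_iff b).2 hb)
    (by rw [← map_sub, posSemidef_algebraMap_iff]; exact sub_nonneg.2 hab)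
  rw [cfc_algebraMap, cfc_algebraMap, ← map_sub, posSemidef_algebraMap_iff] at h
  exact sub_nonneg.1 h

theorem mfun_comm (hf : IsFop f) {x y : ℝ} (hx : 0 < x) (hy : 0 < y) :
    mfun f x y = mfun f y x := by
  rw [mfun, mfun, hf.funcEq _ (div_pos hx hy), inv_div]
  field_simp

theorem mfun_pos (hf : IsFop f) {x y : ℝ} (hx : 0 < x) (hy : 0 < y) : 0 < mfun f x y :=
  mul_pos hy (hf.pos _ (div_pos hx hy))

variable {f0 : ℝ}

theorem fzero_nonneg (hf : IsFop f) (hf0 : IsFzero f f0) : 0 ≤ f0 :=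
  ge_of_tendsto hf0 (eventually_nhdsWithin_of_forall fun _ hx => (hf.pos _ hx).le)

theorem fzero_le (hf : IsFop f) (hf0 : IsFzero f f0) {t : ℝ} (ht : 0 < t) : f0 ≤ f t :=
  (hf.monotoneOn.mono Set.Ioi_subset_Ici_self).le_of_tendsto_nhdsGT hf0 ht

theorem fzero_mul_le_mfun (hf : IsFop f) (hf0 : IsFzero f f0) {x y : ℝ} (hx : 0 < x)
    (hy : 0 < y) : f0 * y ≤ mfun f x y := by
  rw [mfun, mul_comm]
  exact mul_le_mul_of_nonneg_left (hf.fzero_le hf0 (div_pos hx hy)) hy.le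

theorem fzero_mul_sq_sub_le (hf : IsFop f) (hf0 : IsFzero f f0) {x y : ℝ} (hx : 0 < x)
    (hy : 0 < y) : f0 * (x - y) ^ 2 ≤ (x + y) * mfun f x y := by
  have hy' := hf.fzero_mul_le_mfun hf0 hx hy
  have hx' : f0 * x ≤ mfun f x y := hf.mfun_comm hx hy ▸ hf.fzero_mul_le_mfun hf0 hy hx
  have hxy : 0 ≤ f0 * (x * y) := mul_nonneg (hf.fzero_nonneg hf0) (mul_pos hx hy).le
  calc f0 * (x - y) ^ 2 ≤ x * (f0 * x) + y * (f0 * y) := by linear_combination 2 * hxy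
    _ ≤ x * mfun f x y + y * mfun f x y := by gcongr
    _ = (x + y) * mfun f x y := by ring

end IsFop

/-- For every `f ∈ F_op` and `x, y > 0`: `g_cl(x,y) ≥ g_f^{as}(x,y)`; equivalently `(x+y)·m_f(x,y) ≥ f(0)·(x−y)²`. -/
theorem gcl_ge_gas
    (f : ℝ → ℝ) (hf : IsFop f) (f0 : ℝ) (hf0 : IsFzero f f0) :
    ∀ x y : ℝ, 0 < x → 0 < y → gas f f0 x y ≤ gcl x y ∧ f0 * (x - y) ^ 2 ≤ (x + y) * mfun f x y := by
  intro x y hx hy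
  have main := hf.fzero_mul_sq_sub_le hf0 hx hy
  refine ⟨?_, main⟩
  rw [gas, gcl, div_le_div_iff₀ (by linarith [hf.mfun_pos hx hy]) two_pos]
  linarith
end
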